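/- arXiv:math/0104240 — 3 statements merged into one kernel-verified Lean document; each statement's English description precedes it below -/
import Mathlib

section
/- Let C be a cocomplete category and F : ℤ × ℤ → C a functor (where ℤ is the poset of integers). For any integer k, the square formed by the coproduct over i+j=k of the pushouts F(i-1,j) ∪_{F(i-1,j-1)} F(i,j-1), the colimit over {(i,j) : i+j ≤ k-1} of F, the coproduct over i+j=k of F(i,j), and the colimit over {(i,j) : i+j ≤ k} of F, is a pushout square. -/
open CategoryTheory Limits

universe v u

namespace Stmt2

variable {C : Type u} [Category.{v} C] [HasColimits C]

/-- The full subcategory of `ℤ × ℤ` (the product of the poset `ℤ` with itself) on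
the pairs `(i,j)` with `i + j ≤ k`. -/
abbrev Sub (k : ℤ) := ObjectProperty.FullSubcategory (fun ij : ℤ × ℤ => ij.1 + ij.2 ≤ k)

/-- The restriction of `F : ℤ × ℤ ⥤ C` to the full subcategory `{i + j ≤ k}`. -/
noncomputable abbrev restr (F : ℤ × ℤ ⥤ C) (k : ℤ) : Sub k ⥤ C :=
  ObjectProperty.ι _ ⋙ F

/-- The inclusion `{i + j ≤ k - 1} ⥤ {i + j ≤ k}`. -/
noncomputable abbrev subIncl (k : ℤ) : Sub (k - 1) ⥤ Sub k :=
  ObjectProperty.ιOfLE (fun _ h => le_trans h (by omega))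

/-- `colim_{i+j ≤ k-1} F(i,j)`. -/
noncomputable abbrev colimBelow (F : ℤ × ℤ ⥤ C) (k : ℤ) : C :=
  colimit (subIncl k ⋙ restr F k)

/-- The coproduct `⋁_{i+j=k} F(i-1,j) ∪_{F(i-1,j-1)} F(i,j-1)` of the corner
pushouts. -/
noncomputable abbrev cornerCoprod (F : ℤ × ℤ ⥤ C) (k : ℤ) : C :=
  ∐ fun x : {ij : ℤ × ℤ // ij.1 + ij.2 = k} =>
    pushout
      (F.map (⟨homOfLE (le_refl (x.1.1 - 1)), homOfLE (by omega)⟩ :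
        ((x.1.1 - 1, x.1.2 - 1) : ℤ × ℤ) ⟶ (x.1.1 - 1, x.1.2)))
      (F.map (⟨homOfLE (by omega), homOfLE (le_refl (x.1.2 - 1))⟩ :
        ((x.1.1 - 1, x.1.2 - 1) : ℤ × ℤ) ⟶ (x.1.1, x.1.2 - 1)))

/-- The map from the coproduct of corner pushouts to `colim_{i+j ≤ k-1} F`. -/
noncomputable def topMap (F : ℤ × ℤ ⥤ C) (k : ℤ) :
    cornerCoprod F k ⟶ colimBelow F k :=
  Sigma.desc fun x =>
    pushout.desc
      (colimit.ι (subIncl k ⋙ restr F k)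
        ⟨(x.1.1 - 1, x.1.2), by have := x.2; dsimp; omega⟩)
      (colimit.ι (subIncl k ⋙ restr F k)
        ⟨(x.1.1, x.1.2 - 1), by have := x.2; dsimp; omega⟩)
      (by
        exact (colimit.w (subIncl k ⋙ restr F k)
            (show (⟨(x.1.1 - 1, x.1.2 - 1), by have := x.2; dsimp; omega⟩ : Sub (k - 1)) ⟶
                ⟨(x.1.1 - 1, x.1.2), by have := x.2; dsimp; omega⟩ from
              ObjectProperty.homMk ⟨homOfLE (by dsimp; omega), homOfLE (by dsimp; omega)⟩)).trans
          (colimit.w (subIncl k ⋙ restr F k)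
            (show (⟨(x.1.1 - 1, x.1.2 - 1), by have := x.2; dsimp; omega⟩ : Sub (k - 1)) ⟶
                ⟨(x.1.1, x.1.2 - 1), by have := x.2; dsimp; omega⟩ from
              ObjectProperty.homMk ⟨homOfLE (by dsimp; omega), homOfLE (by dsimp; omega)⟩)).symm)

/-- The componentwise map `F(i-1,j) ∪_{F(i-1,j-1)} F(i,j-1) ⟶ F(i,j)` on the
coproducts over `i + j = k`. -/
noncomputable def leftMap (F : ℤ × ℤ ⥤ C) (k : ℤ) :
    cornerCoprod F k ⟶ ∐ fun x : {ij : ℤ × ℤ // ij.1 + ij.2 = k} => F.obj x.1 :=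
  Limits.Sigma.map fun x =>
    pushout.desc
      (F.map (⟨homOfLE (by omega), homOfLE (le_refl _)⟩ :
        ((x.1.1 - 1, x.1.2) : ℤ × ℤ) ⟶ (x.1.1, x.1.2)))
      (F.map (⟨homOfLE (le_refl _), homOfLE (by omega)⟩ :
        ((x.1.1, x.1.2 - 1) : ℤ × ℤ) ⟶ (x.1.1, x.1.2)))
      (by rw [← F.map_comp, ← F.map_comp]; rfl)

/-- The canonical map `colim_{i+j ≤ k-1} F ⟶ colim_{i+j ≤ k} F`. -/
noncomputable def rightMap (F : ℤ × ℤ ⥤ C) (k : ℤ) :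
    colimBelow F k ⟶ colimit (restr F k) :=
  colimit.pre (restr F k) (subIncl k)

/-- The canonical map `⋁_{i+j=k} F(i,j) ⟶ colim_{i+j ≤ k} F`. -/
noncomputable def bottomMap (F : ℤ × ℤ ⥤ C) (k : ℤ) :
    (∐ fun x : {ij : ℤ × ℤ // ij.1 + ij.2 = k} => F.obj x.1) ⟶ colimit (restr F k) :=
  Sigma.desc fun x => colimit.ι (restr F k) ⟨x.1, le_of_eq x.2⟩

/-! A cocone on `F` restricted to `{i + j ≤ k}` amounts to a cocone on the restriction to
`{i + j ≤ k - 1}` together with maps out of `F(i,j)` for `i + j = k` that are compatible with the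
two maps `F(i-1,j) ⟶ F(i,j)` and `F(i,j-1) ⟶ F(i,j)`: every morphism from a point `x` with
`x.1 + x.2 ≤ k - 1` to a point `y` of the antidiagonal factors through `(y.1 - 1, y.2)` or through
`(y.1, y.2 - 1)`. This compatibility is exactly what a map out of the coproduct of corner pushouts
tests. -/

instance {D E : Type*} [Category D] [Category E] [Quiver.IsThin D] [Quiver.IsThin E] :
    Quiver.IsThin (D × E) :=
  fun _ _ => ⟨fun _ _ => Prod.ext (Subsingleton.elim _ _) (Subsingleton.elim _ _)⟩

instance {D : Type*} [Category D] [Quiver.IsThin D] (P : ObjectProperty D) :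
    Quiver.IsThin P.FullSubcategory :=
  fun _ _ => ⟨fun _ _ => ObjectProperty.hom_ext _ (Subsingleton.elim _ _)⟩

abbrev Antidiagonal (k : ℤ) := {ij : ℤ × ℤ // ij.1 + ij.2 = k}

namespace Antidiagonal

variable {k : ℤ} (x : Antidiagonal k)

abbrev predFst : Sub (k - 1) := ⟨(x.1.1 - 1, x.1.2), by have := x.2; dsimp; omega⟩

abbrev predSnd : Sub (k - 1) := ⟨(x.1.1, x.1.2 - 1), by have := x.2; dsimp; omega⟩

noncomputable def fstEdge : x.predFst.obj ⟶ x.1 := ⟨homOfLE (by dsimp; omega), 𝟙 _⟩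

noncomputable def sndEdge : x.predSnd.obj ⟶ x.1 := ⟨𝟙 _, homOfLE (by dsimp; omega)⟩

end Antidiagonal

section

variable {F : ℤ × ℤ ⥤ C} {k : ℤ}

lemma topMap_comp_rightMap : topMap F k ≫ rightMap F k = leftMap F k ≫ bottomMap F k := by
  refine Sigma.hom_ext _ _ fun (x : Antidiagonal k) => pushout.hom_ext ?_ ?_ <;>
    simp only [topMap, leftMap, bottomMap, rightMap, Sigma.ι_desc_assoc, Sigma.ι_map_assoc]
  · rw [pushout.inl_desc_assoc, pushout.inl_desc_assoc, colimit.ι_pre, Sigma.ι_desc]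
    exact (colimit.w (restr F k)
      (ObjectProperty.homMk x.fstEdge : (subIncl k).obj x.predFst ⟶ ⟨x.1, x.2.le⟩)).symm
  · rw [pushout.inr_desc_assoc, pushout.inr_desc_assoc, colimit.ι_pre, Sigma.ι_desc]
    exact (colimit.w (restr F k)
      (ObjectProperty.homMk x.sndEdge : (subIncl k).obj x.predSnd ⟶ ⟨x.1, x.2.le⟩)).symm

lemma hom_ext_of_rightMap_of_bottomMap {W : C} {f g : colimit (restr F k) ⟶ W}
    (hr : rightMap F k ≫ f = rightMap F k ≫ g) (hb : bottomMap F k ≫ f = bottomMap F k ≫ g) :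
    f = g := by
  refine colimit.hom_ext fun x => ?_
  by_cases hx : x.obj.1 + x.obj.2 ≤ k - 1
  · have := colimit.ι (subIncl k ⋙ restr F k) ⟨x.obj, hx⟩ ≫= hr
    rwa [rightMap, colimit.ι_pre_assoc, colimit.ι_pre_assoc] at this
  · have hx' : x.obj.1 + x.obj.2 = k := by have := x.2; omega
    have := Sigma.ι (fun y : Antidiagonal k => F.obj y.1) ⟨x.obj, hx'⟩ ≫= hb
    rwa [bottomMap, Sigma.ι_desc_assoc, Sigma.ι_desc_assoc] at this

variable {W : C} {h : colimBelow F k ⟶ W} {v : (∐ fun x : Antidiagonal k => F.obj x.1) ⟶ W}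

lemma colimit_ι_predFst_comp_of_comm (hcomm : topMap F k ≫ h = leftMap F k ≫ v)
    (y : Antidiagonal k) :
    colimit.ι (subIncl k ⋙ restr F k) y.predFst ≫ h =
      F.map y.fstEdge ≫ Sigma.ι (fun x : Antidiagonal k => F.obj x.1) y ≫ v := by
  have := pushout.inl _ _ ≫= Sigma.ι _ y ≫= hcomm
  simp only [topMap, leftMap, Sigma.ι_desc_assoc, Sigma.ι_map_assoc] at this
  rw [pushout.inl_desc_assoc, pushout.inl_desc_assoc] at this
  exact this

lemma colimit_ι_predSnd_comp_of_comm (hcomm : topMap F k ≫ h = leftMap F k ≫ v)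
    (y : Antidiagonal k) :
    colimit.ι (subIncl k ⋙ restr F k) y.predSnd ≫ h =
      F.map y.sndEdge ≫ Sigma.ι (fun x : Antidiagonal k => F.obj x.1) y ≫ v := by
  have := pushout.inr _ _ ≫= Sigma.ι _ y ≫= hcomm
  simp only [topMap, leftMap, Sigma.ι_desc_assoc, Sigma.ι_map_assoc] at this
  rw [pushout.inr_desc_assoc, pushout.inr_desc_assoc] at this
  exact this

lemma colimit_ι_comp_of_comm (hcomm : topMap F k ≫ h = leftMap F k ≫ v)
    (x : Sub (k - 1)) (y : Antidiagonal k) (f : x.obj ⟶ y.1) :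
    colimit.ι (subIncl k ⋙ restr F k) x ≫ h =
      F.map f ≫ Sigma.ι (fun x : Antidiagonal k => F.obj x.1) y ≫ v := by
  have hx := x.2
  have hy := y.2
  have hf₁ := leOfHom f.1
  have hf₂ := leOfHom f.2
  rcases lt_or_ge x.obj.1 y.1.1 with hlt | hge
  · let g : x ⟶ y.predFst := ObjectProperty.homMk ⟨homOfLE (by dsimp; omega), homOfLE hf₂⟩
    rw [show f = g.hom ≫ y.fstEdge from Subsingleton.elim _ _, F.map_comp_assoc,
      ← colimit_ι_predFst_comp_of_comm hcomm]
    exact (colimit.w_assoc _ g h).symm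
  · let g : x ⟶ y.predSnd := ObjectProperty.homMk ⟨homOfLE hf₁, homOfLE (by dsimp; omega)⟩
    rw [show f = g.hom ≫ y.sndEdge from Subsingleton.elim _ _, F.map_comp_assoc,
      ← colimit_ι_predSnd_comp_of_comm hcomm]
    exact (colimit.w_assoc _ g h).symm

noncomputable def coconeOfComm (hcomm : topMap F k ≫ h = leftMap F k ≫ v) :
    Cocone (restr F k) where
  pt := W
  ι.app x :=
    if hx : x.obj.1 + x.obj.2 ≤ k - 1 then colimit.ι (subIncl k ⋙ restr F k) ⟨x.obj, hx⟩ ≫ h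
    else Sigma.ι (fun y : Antidiagonal k => F.obj y.1) ⟨x.obj, by have := x.2; omega⟩ ≫ v
  ι.naturality x y f := by
    have hf₁ := leOfHom f.hom.1
    have hf₂ := leOfHom f.hom.2
    dsimp only [Functor.const_obj_obj, Functor.const_obj_map]
    rw [Category.comp_id]
    by_cases hy : y.obj.1 + y.obj.2 ≤ k - 1
    · have hx : x.obj.1 + x.obj.2 ≤ k - 1 := by omega
      rw [dif_pos hy, dif_pos hx]
      exact colimit.w_assoc (subIncl k ⋙ restr F k)
        (ObjectProperty.homMk f.hom : ⟨x.obj, hx⟩ ⟶ ⟨y.obj, hy⟩) h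
    by_cases hx : x.obj.1 + x.obj.2 ≤ k - 1
    · rw [dif_neg hy, dif_pos hx]
      exact (colimit_ι_comp_of_comm hcomm ⟨x.obj, hx⟩ ⟨y.obj, by have := y.2; omega⟩ f.hom).symm
    · have hxy : x = y := by
        have := x.2
        have := y.2
        ext <;> omega
      subst hxy
      rw [show f = 𝟙 x from Subsingleton.elim _ _]
      simp

lemma rightMap_desc_coconeOfComm (hcomm : topMap F k ≫ h = leftMap F k ≫ v) :
    rightMap F k ≫ colimit.desc (restr F k) (coconeOfComm hcomm) = h :=
  colimit.hom_ext fun x => by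
    rw [rightMap, colimit.ι_pre_assoc, colimit.ι_desc]
    exact dif_pos x.2

lemma bottomMap_desc_coconeOfComm (hcomm : topMap F k ≫ h = leftMap F k ≫ v) :
    bottomMap F k ≫ colimit.desc (restr F k) (coconeOfComm hcomm) = v :=
  Sigma.hom_ext _ _ fun x => by
    rw [bottomMap, Sigma.ι_desc_assoc, colimit.ι_desc]
    exact dif_neg (by have := x.2; dsimp; omega)

end

/-- For a functor `F : ℤ × ℤ ⥤ C` into a cocomplete category and any `k ∈ ℤ`, the
square

  `⋁_{i+j=k} F(i-1,j) ∪_{F(i-1,j-1)} F(i,j-1)`  →  `colim_{i+j ≤ k-1} F(i,j)`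
                     ↓                                        ↓
          `⋁_{i+j=k} F(i,j)`                     →  `colim_{i+j ≤ k} F(i,j)`

is a pushout square. -/
theorem stmt2 (F : ℤ × ℤ ⥤ C) (k : ℤ) :
    IsPushout (topMap F k) (leftMap F k) (rightMap F k) (bottomMap F k) :=
  IsPushout.of_isColimit' ⟨topMap_comp_rightMap⟩ <|
    PushoutCocone.IsColimit.mk _ (fun s => colimit.desc _ (coconeOfComm s.condition))
      (fun s => rightMap_desc_coconeOfComm s.condition)
      (fun s => bottomMap_desc_coconeOfComm s.condition)
      fun s _ hr hb => hom_ext_of_rightMap_of_bottomMap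
        (hr.trans (rightMap_desc_coconeOfComm s.condition).symm)
        (hb.trans (bottomMap_desc_coconeOfComm s.condition).symm)

end Stmt2
end

section
/- Let Y be a filtered pointed set (or pointed simplicial set), filtered by injections (cofibrations), i.e., a functor Y : ℤ → Set_* with each Y(s-1) → Y(s) injective. For any q ≥ 1 and s ∈ ℤ, the C_q-fixed points of the q-fold smash power at filtration level s satisfy (Y^{∧q}(s))^{C_q} ≅ Y(⌊s/q⌋), where the diagonal map induces the isomorphism. -/
/-- Rotation-fixed tuples are constant. -/
lemma stmt5_const {α : Type*} {q : ℕ} (hq : 0 < q) (x : Fin q → α)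
    (hx : ∀ i : Fin q, x ⟨(i.val + 1) % q, Nat.mod_lt _ hq⟩ = x i) :
    ∀ i : Fin q, x i = x ⟨0, hq⟩ := by
  have key : ∀ k : ℕ, x ⟨k % q, Nat.mod_lt _ hq⟩ = x ⟨0, hq⟩ := by
    intro k
    induction k with
    | zero => simp [Nat.zero_mod]
    | succ n ih =>
      have h := hx ⟨n % q, Nat.mod_lt _ hq⟩
      have hm : (n % q + 1) % q = (n + 1) % q := Nat.mod_add_mod n q 1
      have heq : (⟨(n % q + 1) % q, Nat.mod_lt _ hq⟩ : Fin q)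
          = ⟨(n + 1) % q, Nat.mod_lt _ hq⟩ := Fin.ext hm
      rw [heq] at h
      exact h.trans ih
  intro i
  have := key i.val
  simpa [Nat.mod_eq_of_lt i.isLt] using this

/-- For a filtered (pointed simplicial) set `Y`, filtered by injections, the
`C_q`-fixed points of the `q`-fold smash power at filtration level `s` are
`Y(⌊s/q⌋)`: the diagonal induces a bijection between `Y(⌊s/q⌋)` and the tuples
fixed by the cyclic rotation which lie in filtration `≤ s`, i.e.
`(Y^{∧q}(s))^{C_q} ≅ Y(⌊s/q⌋)`. -/
theorem stmt5 (α : Type*) (q : ℕ) (hq : 0 < q) (s : ℤ) (Y : ℤ → Set α)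
    (hY : Monotone Y) :
    ∃ e : Y (Int.fdiv s q) ≃
        {x : Fin q → α //
          (∀ i : Fin q, x ⟨(i.val + 1) % q, Nat.mod_lt _ hq⟩ = x i) ∧
          ∃ a : Fin q → ℤ, (∑ i, a i) ≤ s ∧ ∀ i, x i ∈ Y (a i)},
      ∀ (y : Y (Int.fdiv s q)) (i : Fin q), (e y).1 i = (y : α) := by
  have hfd : Int.fdiv s q = s / (q : ℤ) := Int.fdiv_eq_ediv_of_nonneg _ (by positivity)
  have hq' : (0 : ℤ) < (q : ℤ) := by exact_mod_cast hq
  refine ⟨{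
    toFun := fun y => ⟨fun _ => (y : α), fun i => rfl,
      ⟨fun _ => Int.fdiv s q, by
        rw [Finset.sum_const, Finset.card_univ, Fintype.card_fin, hfd]
        simpa [mul_comm] using Int.ediv_mul_le s (ne_of_gt hq'),
        fun i => y.2⟩⟩
    invFun := fun x => ⟨x.1 ⟨0, hq⟩, by
      obtain ⟨hrot, a, hsum, hmem⟩ := x.2
      obtain ⟨j, -, hj⟩ := Finset.exists_min_image Finset.univ a ⟨⟨0, hq⟩, Finset.mem_univ _⟩
      have hle : (q : ℤ) * a j ≤ s := by
        calc (q : ℤ) * a j = ∑ _i : Fin q, a j := by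
              rw [Finset.sum_const, Finset.card_univ, Fintype.card_fin, nsmul_eq_mul]
          _ ≤ ∑ i, a i := Finset.sum_le_sum fun i _ => hj i (Finset.mem_univ i)
          _ ≤ s := hsum
      have haj : a j ≤ Int.fdiv s q := by
        rw [hfd, Int.le_ediv_iff_mul_le hq']
        linarith [hle]
      have := hmem j
      rw [stmt5_const hq x.1 hrot j] at this
      exact hY haj this⟩
    left_inv := fun y => rfl
    right_inv := fun x => by
      ext i
      exact (stmt5_const hq x.1 x.2.1 i).symm }, fun y i => rfl⟩
end

section
/- Let R be the differential graded ring (normalized chain complex) with a generator 1 in degree 0 and a generator t in degree 1, with differential d(t) = pⁿ·1. The Hochschild homology of R over ℤ satisfies HH_{2k}(R) ≅ ℤ/pⁿ for all k ≥ 0, and HH_{2k-1}(R) = 0 for all k ≥ 1. -/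
open CategoryTheory

/-- The normalized Hochschild chain complex of the dg ring `R` with generators `1` in
degree `0` and `t` in degree `1` and `d(t) = c·1`: it has one free generator
(`1⊗t^{⊗k}` in degree `2k`, `t^{⊗k}` in degree `2k-1`), and the Hochschild boundary
`b` takes `t^{⊗k}` to `c·(1⊗t^{⊗(k-1)})`; i.e. the complex
`⋯ → ℤ →0→ ℤ →c→ ℤ →0→ ℤ →c→ ℤ` with multiplication by `c` from odd to even degrees. -/
noncomputable def hochschildComplex (c : ℤ) : ChainComplex (ModuleCat ℤ) ℕ :=
  ChainComplex.of (fun _ => ModuleCat.of ℤ ℤ)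
    (fun n => if Even n then ModuleCat.ofHom (c • LinearMap.id) else 0)
    (by
      intro n
      rcases Nat.even_or_odd n with h | h
      · have h' : ¬ Even (n + 1) := by simp [Nat.even_add_one, h]
        simp only [if_neg h']
        exact Limits.zero_comp
      · simp only [if_neg (Nat.not_even_iff_odd.mpr h)]
        exact Limits.comp_zero)

/-! In degree `2k` the outgoing differential vanishes and the incoming one is multiplication
by `c`, so the homology is `ℤ ⧸ (c)`; in degree `2k + 1` the outgoing differential is
multiplication by `c ≠ 0`, which is injective, so the homology vanishes. -/

section SMulShortComplexes

variable {R : Type*} [CommRing R] (c : R)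

lemma LinearMap.range_smul_id :
    LinearMap.range (c • LinearMap.id : R →ₗ[R] R) = Ideal.span {c} := by
  ext x
  rw [LinearMap.mem_range, Ideal.mem_span_singleton']
  simp [mul_comm]

noncomputable abbrev smulZeroShortComplex : ShortComplex (ModuleCat R) :=
  ShortComplex.mk (ModuleCat.ofHom (c • LinearMap.id) : ModuleCat.of R R ⟶ ModuleCat.of R R)
    (0 : ModuleCat.of R R ⟶ ModuleCat.of R R) Limits.comp_zero

noncomputable def smulZeroShortComplex.homologyIso :
    (smulZeroShortComplex c).homology ≅ ModuleCat.of R (R ⧸ Ideal.span {c}) :=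
  (smulZeroShortComplex c).asIsoHomologyι rfl ≪≫
    (smulZeroShortComplex c).moduleCatOpcyclesIso ≪≫
    (Submodule.quotEquivOfEq _ _ (LinearMap.range_smul_id c)).toModuleIso

noncomputable abbrev zeroSmulShortComplex : ShortComplex (ModuleCat R) :=
  ShortComplex.mk (0 : ModuleCat.of R R ⟶ ModuleCat.of R R) (ModuleCat.ofHom (c • LinearMap.id))
    Limits.zero_comp

variable {c} in
lemma zeroSmulShortComplex_exact (hc : IsSMulRegular R c) : (zeroSmulShortComplex c).Exact := by
  rw [ShortComplex.moduleCat_exact_iff]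
  intro x hx
  exact ⟨0, (hc (hx.trans (smul_zero c).symm)).symm⟩

end SMulShortComplexes

lemma ChainComplex.next_nat (i : ℕ) : (ComplexShape.down ℕ).next i = i - 1 := by
  cases i with
  | zero => exact ChainComplex.next_nat_zero
  | succ i => exact ChainComplex.next_nat_succ i

namespace hochschildComplex

variable (c : ℤ)

lemma d_succ (m : ℕ) :
    (hochschildComplex c).d (m + 1) m =
      if Even m then ModuleCat.ofHom (c • LinearMap.id) else 0 :=
  ChainComplex.of_d (fun _ => ModuleCat.of ℤ ℤ)
    (fun n => if Even n then ModuleCat.ofHom (c • LinearMap.id) else 0) m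

lemma d_succ_of_even {m : ℕ} (hm : Even m) :
    (hochschildComplex c).d (m + 1) m = ModuleCat.ofHom (c • LinearMap.id) := by
  rw [d_succ, if_pos hm]

lemma d_succ_of_odd {m : ℕ} (hm : Odd m) : (hochschildComplex c).d (m + 1) m = 0 := by
  rw [d_succ, if_neg (Nat.not_even_iff_odd.mpr hm)]
  rfl

lemma d_two_mul_sub_one (k : ℕ) : (hochschildComplex c).d (2 * k) (2 * k - 1) = 0 := by
  rcases k with _ | m
  · exact (hochschildComplex c).shape _ _ (by simp)
  · rw [show 2 * (m + 1) = 2 * m + 1 + 1 by ring, Nat.add_sub_cancel]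
    exact d_succ_of_odd c (odd_two_mul_add_one m)

noncomputable def scTwoMulIso (k : ℕ) :
    (hochschildComplex c).sc' (2 * k + 1) (2 * k) (2 * k - 1) ≅ smulZeroShortComplex c :=
  ShortComplex.isoMk (Iso.refl _) (Iso.refl _) (Iso.refl _)
    (by
      dsimp [HomologicalComplex.sc', HomologicalComplex.shortComplexFunctor']
      rw [d_succ_of_even c (even_two_mul k)]
      rfl)
    (by
      dsimp [HomologicalComplex.sc', HomologicalComplex.shortComplexFunctor']
      rw [d_two_mul_sub_one]
      rfl)

noncomputable def scTwoMulAddOneIso (m : ℕ) :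
    (hochschildComplex c).sc' (2 * m + 2) (2 * m + 1) (2 * m) ≅ zeroSmulShortComplex c :=
  ShortComplex.isoMk (Iso.refl _) (Iso.refl _) (Iso.refl _)
    (by
      dsimp [HomologicalComplex.sc', HomologicalComplex.shortComplexFunctor']
      rw [d_succ_of_odd c (odd_two_mul_add_one m)]
      rfl)
    (by
      dsimp [HomologicalComplex.sc', HomologicalComplex.shortComplexFunctor']
      rw [d_succ_of_even c (even_two_mul m)]
      rfl)

noncomputable def homologyTwoMulIso (k : ℕ) :
    (hochschildComplex c).homology (2 * k) ≅ ModuleCat.of ℤ (ZMod c.natAbs) :=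
  (hochschildComplex c).homologyIsoSc' _ _ _ (by simp) (ChainComplex.next_nat (2 * k)) ≪≫
    ShortComplex.homologyMapIso (scTwoMulIso c k) ≪≫ smulZeroShortComplex.homologyIso c ≪≫
    (Int.quotientSpanEquivZMod c).toAddEquiv.toIntLinearEquiv.toModuleIso

variable {c} in
lemma isZero_homology_two_mul_add_one (hc : c ≠ 0) (m : ℕ) :
    Limits.IsZero ((hochschildComplex c).homology (2 * m + 1)) := by
  rw [← HomologicalComplex.exactAt_iff_isZero_homology,
    HomologicalComplex.exactAt_iff' _ (2 * m + 2) (2 * m + 1) (2 * m) (by simp) (by simp),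
    ShortComplex.exact_iff_of_iso (scTwoMulAddOneIso c m)]
  exact zeroSmulShortComplex_exact (IsSMulRegular.of_ne_zero hc)

end hochschildComplex

/-- The Hochschild homology of the dg ring `R` with generators `1` (degree 0) and `t`
(degree 1), `d(t) = pⁿ·1`, i.e. the derived Hochschild (Shukla) homology of `ℤ/pⁿ`:
`HH_{2k}(R) ≅ ℤ/pⁿ` for all `k ≥ 0` and `HH_{2k-1}(R) = 0` for all `k ≥ 1`. -/
theorem stmt7 (p n : ℕ) (hp : p.Prime) :
    (∀ k : ℕ, Nonempty
      ((hochschildComplex ((p : ℤ) ^ n)).homology (2 * k) ≅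
        ModuleCat.of ℤ (ZMod (p ^ n)))) ∧
    (∀ k : ℕ, 1 ≤ k →
      Limits.IsZero ((hochschildComplex ((p : ℤ) ^ n)).homology (2 * k - 1))) := by
  have hc : ((p : ℤ) ^ n).natAbs = p ^ n := by simp
  refine ⟨fun k => ⟨hc ▸ hochschildComplex.homologyTwoMulIso _ k⟩, fun k hk => ?_⟩
  obtain ⟨m, rfl⟩ := Nat.exists_eq_add_of_le' hk
  rw [show 2 * (m + 1) - 1 = 2 * m + 1 by omega]
  exact hochschildComplex.isZero_homology_two_mul_add_one (pow_ne_zero _ (mod_cast hp.ne_zero)) m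
end
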